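/- arXiv:1511.00617 — 2 statements merged into one kernel-verified Lean document; each statement's English description precedes it below -/
import Mathlib

section
/- Let V be a finite-dimensional complex vector space with a nondegenerate symmetric bilinear form ⟨,⟩, and let s : V → V be a linear map, self-adjoint with respect to ⟨,⟩, which is diagonalizable with all eigenvalues distinct (regular semisimple). If U ⊆ V is a nonzero totally isotropic subspace, then dim(sU ∩ U) < dim(sU). -/
/-- Let `V` be a finite-dimensional complex vector space with a nondegenerate symmetric
bilinear form `B`, and let `s` be a self-adjoint endomorphism which is diagonalizable with
all eigenspaces of dimension at most one (regular semisimple).  If `U` is a nonzero totally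
isotropic subspace then `dim (sU ∩ U) < dim (sU)`. -/
theorem stmt_0 (V : Type*) [AddCommGroup V] [Module ℂ V] [FiniteDimensional ℂ V]
    (B : V →ₗ[ℂ] V →ₗ[ℂ] ℂ)
    (hsymm : ∀ v w : V, B v w = B w v)
    (hnd : ∀ v : V, (∀ w : V, B v w = 0) → v = 0)
    (s : Module.End ℂ V)
    (hsa : ∀ v w : V, B (s v) w = B v (s w))
    (hdiag : ⨆ μ : ℂ, s.eigenspace μ = ⊤)
    (hreg : ∀ μ : ℂ, Module.finrank ℂ ↥(s.eigenspace μ) ≤ 1)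
    (U : Submodule ℂ V) (hU : U ≠ ⊥)
    (hiso : ∀ u ∈ U, ∀ u' ∈ U, B u u' = 0) :
    Module.finrank ℂ ↥(U.map (s : V →ₗ[ℂ] V) ⊓ U) <
      Module.finrank ℂ ↥(U.map (s : V →ₗ[ℂ] V)) := by
  refine Submodule.finrank_lt_finrank_of_lt (lt_of_le_of_ne inf_le_left ?_)
  intro heq
  have hmap : U.map (s : V →ₗ[ℂ] V) ≤ U := heq ▸ inf_le_right
  have hinv : ∀ u ∈ U, s u ∈ U := fun u hu => hmap ⟨u, hu, rfl⟩
  haveI : Nontrivial U := Submodule.nontrivial_iff_ne_bot.mpr hU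
  set s' : Module.End ℂ U := LinearMap.restrict (s : V →ₗ[ℂ] V) hinv with hs'
  obtain ⟨μ, hμ⟩ := Module.End.exists_eigenvalue s'
  obtain ⟨x, hx⟩ := hμ.exists_hasEigenvector
  obtain ⟨hx1, hx2⟩ := hx
  rw [Module.End.mem_eigenspace_iff] at hx1
  set v : V := (x : V) with hv
  have hvU : v ∈ U := x.2
  have hvne : v ≠ 0 := fun h => hx2 (Subtype.ext h)
  have hsv : s v = μ • v := by
    have := congrArg (Subtype.val) hx1
    simpa [s', LinearMap.restrict_apply] using this
  -- v is an eigenvector of s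
  have hveig : v ∈ s.eigenspace μ := Module.End.mem_eigenspace_iff.mpr hsv
  -- B v vanishes on every eigenspace
  have key : ∀ ν : ℂ, s.eigenspace ν ≤ LinearMap.ker (B v) := by
    intro ν w hw
    rw [LinearMap.mem_ker]
    rw [Module.End.mem_eigenspace_iff] at hw
    by_cases hνμ : ν = μ
    · -- same eigenvalue: eigenspace μ = span v, so w = c • v
      subst hνμ
      have hspan : Submodule.span ℂ {v} = s.eigenspace ν := by
        apply Submodule.eq_of_le_of_finrank_le
        · rw [Submodule.span_le, Set.singleton_subset_iff]; exact hveig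
        · calc Module.finrank ℂ ↥(s.eigenspace ν) ≤ 1 := hreg ν
            _ = Module.finrank ℂ ↥(Submodule.span ℂ {v}) :=
              (finrank_span_singleton hvne).symm
      have : w ∈ Submodule.span ℂ {v} := hspan ▸ (Module.End.mem_eigenspace_iff.mpr hw)
      obtain ⟨c, rfl⟩ := Submodule.mem_span_singleton.mp this
      simp [hiso v hvU v hvU]
    · -- distinct eigenvalues: orthogonal by self-adjointness
      have h1 : μ * B v w = ν * B v w := by
        calc μ * B v w = B (μ • v) w := by simp
          _ = B (s v) w := by rw [hsv]
          _ = B v (s w) := hsa v w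
          _ = B v (ν • w) := by rw [hw]
          _ = ν * B v w := by simp
      have : (μ - ν) * B v w = 0 := by ring_nf; linear_combination h1
      rcases mul_eq_zero.mp this with h | h
      · exact absurd (sub_eq_zero.mp h).symm hνμ
      · exact h
  have hker : (⊤ : Submodule ℂ V) ≤ LinearMap.ker (B v) := by
    rw [← hdiag]
    exact iSup_le key
  have : v = 0 := hnd v fun w => hker (Submodule.mem_top) |>.out
  exact hvne this
end

section
/- Let V be a finite-dimensional complex vector space with a nondegenerate symmetric bilinear form, s a self-adjoint regular semisimple endomorphism (distinct eigenvalues, no isotropic eigenvectors), and v ∈ V a nonzero vector with ⟨s^i v, v⟩ = 0 for i = 0, 1, …, 2k−2. Then the vectors v, sv, s²v, …, s^{k−1}v are linearly independent, so V_k = span{v, sv, …, s^{k−1}v} has dimension k; moreover V_k is totally isotropic. -/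
/-- Let `V` be a finite-dimensional complex vector space with a nondegenerate symmetric
bilinear form `B`, `s` a self-adjoint regular semisimple endomorphism (diagonalizable with
all eigenspaces of dimension at most one), and `v ≠ 0` with `B (sⁱ v) v = 0` for
`i = 0, 1, …, 2k − 2`.  Then `v, s v, …, s^{k−1} v` are linearly independent, so
`V_k = span {v, s v, …, s^{k−1} v}` has dimension `k`; moreover `V_k` is totally
isotropic. -/
theorem stmt_1 (V : Type*) [AddCommGroup V] [Module ℂ V] [FiniteDimensional ℂ V]
    (B : V →ₗ[ℂ] V →ₗ[ℂ] ℂ)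
    (hsymm : ∀ v w : V, B v w = B w v)
    (hnd : ∀ v : V, (∀ w : V, B v w = 0) → v = 0)
    (s : Module.End ℂ V)
    (hsa : ∀ v w : V, B (s v) w = B v (s w))
    (hdiag : ⨆ μ : ℂ, s.eigenspace μ = ⊤)
    (hreg : ∀ μ : ℂ, Module.finrank ℂ ↥(s.eigenspace μ) ≤ 1)
    (v : V) (hv : v ≠ 0) (k : ℕ) (hk : 1 ≤ k)
    (horth : ∀ i : ℕ, i + 2 ≤ 2 * k → B ((s ^ i) v) v = 0) :
    LinearIndependent ℂ (fun i : Fin k => (s ^ (i : ℕ)) v) ∧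
    Module.finrank ℂ
        ↥(Submodule.span ℂ (Set.range fun i : Fin k => (s ^ (i : ℕ)) v)) = k ∧
    ∀ u ∈ Submodule.span ℂ (Set.range fun i : Fin k => (s ^ (i : ℕ)) v),
      ∀ u' ∈ Submodule.span ℂ (Set.range fun i : Fin k => (s ^ (i : ℕ)) v),
        B u u' = 0 := by
  classical
  -- moving powers of `s` across `B`
  have key : ∀ (j : ℕ) (x y : V), B ((s ^ j) x) y = B x ((s ^ j) y) := by
    intro j
    induction j with
    | zero => simp
    | succ n ih =>
      intro x y
      have h1 : (s ^ (n + 1)) x = (s ^ n) (s x) := by rw [pow_succ]; rfl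
      have h2 : (s ^ (n + 1)) y = s ((s ^ n) y) := by rw [pow_succ']; rfl
      rw [h1, ih, hsa, ← h2]
  -- B-orthogonality of the iterates
  have hBij : ∀ i j : ℕ, i < k → j < k → B ((s ^ i) v) ((s ^ j) v) = 0 := by
    intro i j hi hj
    have h1 : (s ^ j) ((s ^ i) v) = (s ^ (j + i)) v := by rw [pow_add]; rfl
    have := (key j ((s ^ i) v) v).symm
    rw [h1] at this
    rw [this]
    exact horth (j + i) (by omega)
  -- decompose v into eigencomponents
  obtain ⟨w, hw, hsum⟩ := (Submodule.mem_iSup_iff_exists_finsupp _ v).mp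
    (by rw [hdiag]; exact Submodule.mem_top)
  have hwe : ∀ μ : ℂ, s (w μ) = μ • w μ := fun μ => Module.End.mem_eigenspace_iff.mp (hw μ)
  have hpow : ∀ (i : ℕ) (μ : ℂ), (s ^ i) (w μ) = μ ^ i • w μ := by
    intro i μ
    induction i with
    | zero => simp
    | succ n ih =>
      have h2 : (s ^ (n + 1)) (w μ) = s ((s ^ n) (w μ)) := by rw [pow_succ']; rfl
      rw [h2, ih, map_smul, hwe, smul_smul, pow_succ, mul_comm]
  have hsv : ∀ i : ℕ, (s ^ i) v = ∑ μ ∈ w.support, μ ^ i • w μ := by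
    intro i
    conv_lhs => rw [← hsum]
    rw [Finsupp.sum, map_sum]
    exact Finset.sum_congr rfl fun μ _ => hpow i μ
  -- eigenvectors with distinct eigenvalues are B-orthogonal
  have hcross : ∀ (μ ν : ℂ) (x y : V), x ∈ s.eigenspace μ → y ∈ s.eigenspace ν →
      μ ≠ ν → B x y = 0 := by
    intro μ ν x y hx hy hne
    have h1 := hsa x y
    rw [Module.End.mem_eigenspace_iff.mp hx, Module.End.mem_eigenspace_iff.mp hy,
      map_smul, LinearMap.smul_apply, map_smul] at h1
    have h2 : (μ - ν) * B x y = 0 := by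
      have : μ * B x y = ν * B x y := by simpa using h1
      ring_nf
      linear_combination this
    rcases mul_eq_zero.mp h2 with h | h
    · exact absurd (sub_eq_zero.mp h) hne
    · exact h
  -- moments
  have hmom : ∀ i : ℕ, i + 2 ≤ 2 * k → ∑ μ ∈ w.support, μ ^ i * B (w μ) (w μ) = 0 := by
    intro i hi
    have h0 := horth i hi
    have hexp : B ((s ^ i) v) v = ∑ μ ∈ w.support, μ ^ i * B (w μ) (w μ) := by
      conv_lhs => rw [hsv i, ← hsum]
      rw [Finsupp.sum, map_sum]
      refine Finset.sum_congr rfl fun ν hν => ?_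
      rw [map_sum, LinearMap.coe_sum, Finset.sum_apply]
      rw [Finset.sum_eq_single ν]
      · rw [map_smul, LinearMap.smul_apply]; rfl
      · intro μ hμ hne
        rw [map_smul, LinearMap.smul_apply,
          hcross μ ν _ _ (hw μ) (hw ν) hne, smul_zero]
      · intro h; exact absurd hν h
    rw [hexp] at h0
    exact h0
  -- a diagonal-isotropic eigencomponent must vanish
  have hker : ∀ μ, w μ ≠ 0 → B (w μ) (w μ) = 0 → w μ = 0 := by
    intro μ hμne hb
    apply hnd
    intro u0
    have htop : (⊤ : Submodule ℂ V) ≤ LinearMap.ker (B (w μ)) := by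
      rw [← hdiag]
      apply iSup_le
      intro ν u hu
      rw [LinearMap.mem_ker]
      by_cases hνμ : ν = μ
      · rw [hνμ] at hu
        -- u and w μ both lie in the ≤ 1-dimensional eigenspace
        have hnotLI : ¬ LinearIndependent ℂ
            ![(⟨w μ, hw μ⟩ : s.eigenspace μ), ⟨u, hu⟩] := by
          intro hLI2
          have h1 := hLI2.fintype_card_le_finrank
          rw [Fintype.card_fin] at h1
          have h2 := hreg μ
          omega
        rw [LinearIndependent.pair_iff] at hnotLI
        push_neg at hnotLI
        obtain ⟨c, d, hcd, hcd0⟩ := hnotLI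
        have hV : c • w μ + d • u = 0 := by
          have := congrArg (Subtype.val) hcd
          simpa using this
        have happ : c * B (w μ) (w μ) + d * B (w μ) u = 0 := by
          have := congrArg (B (w μ)) hV
          simpa using this
        rw [hb, mul_zero, zero_add] at happ
        rcases mul_eq_zero.mp happ with h | h
        · subst h
          have hc0 : c ≠ 0 := fun h0 => (hcd0 h0) rfl
          rw [zero_smul, add_zero] at hV
          exact absurd ((smul_eq_zero.mp hV).resolve_left hc0) hμne
        · exact h
      · exact hcross μ ν _ _ (hw μ) hu (fun h => hνμ h.symm)
    exact LinearMap.mem_ker.mp (htop Submodule.mem_top)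
  -- the support has at least k elements
  have hcard : k ≤ w.support.card := by
    by_contra hlt
    push_neg at hlt
    have hb : ∀ μ ∈ w.support, B (w μ) (w μ) = 0 := by
      intro μ0 hμ0
      set q : Polynomial ℂ := ∏ ν ∈ w.support.erase μ0, (Polynomial.X - Polynomial.C ν)
        with hq
      have hqdeg : q.natDegree = (w.support.erase μ0).card := by
        rw [hq, Polynomial.natDegree_prod _ _
          (fun ν _ => Polynomial.X_sub_C_ne_zero ν)]
        simp [Polynomial.natDegree_X_sub_C]
      have hcarde : (w.support.erase μ0).card = w.support.card - 1 :=
        Finset.card_erase_of_mem hμ0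
      have hpos : 1 ≤ w.support.card := Finset.card_pos.mpr ⟨μ0, hμ0⟩
      have hT : ∑ ν ∈ w.support, q.eval ν * B (w ν) (w ν) = 0 := by
        have hrw : ∀ ν ∈ w.support, q.eval ν * B (w ν) (w ν)
            = ∑ i ∈ Finset.range (q.natDegree + 1),
                q.coeff i * (ν ^ i * B (w ν) (w ν)) := by
          intro ν _
          rw [Polynomial.eval_eq_sum_range, Finset.sum_mul]
          exact Finset.sum_congr rfl fun i _ => by ring
        rw [Finset.sum_congr rfl hrw, Finset.sum_comm]
        refine Finset.sum_eq_zero fun i hi => ?_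
        have hi' : i + 2 ≤ 2 * k := by
          have := Finset.mem_range.mp hi
          omega
        rw [← Finset.mul_sum, hmom i hi', mul_zero]
      have hT2 : ∑ ν ∈ w.support, q.eval ν * B (w ν) (w ν)
          = q.eval μ0 * B (w μ0) (w μ0) := by
        rw [Finset.sum_eq_single μ0]
        · intro ν hν hne
          have hz : q.eval ν = 0 := by
            rw [hq, Polynomial.eval_prod]
            apply Finset.prod_eq_zero (Finset.mem_erase.mpr ⟨hne, hν⟩)
            simp
          rw [hz, zero_mul]
        · intro h; exact absurd hμ0 h
      have hq0 : q.eval μ0 ≠ 0 := by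
        rw [hq, Polynomial.eval_prod]
        apply Finset.prod_ne_zero_iff.mpr
        intro ν hν
        simp only [Polynomial.eval_sub, Polynomial.eval_X, Polynomial.eval_C]
        exact sub_ne_zero.mpr (fun h => (Finset.mem_erase.mp hν).1 h.symm)
      exact (mul_eq_zero.mp (hT2.symm.trans hT)).resolve_left hq0
    apply hv
    rw [← hsum, Finsupp.sum]
    refine Finset.sum_eq_zero fun μ hμ => ?_
    exact hker μ (Finsupp.mem_support_iff.mp hμ) (hb μ hμ)
  -- linear independence
  have hLI : LinearIndependent ℂ (fun i : Fin k => (s ^ (i : ℕ)) v) := by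
    rw [Fintype.linearIndependent_iff]
    intro c hc
    set p : Polynomial ℂ := ∑ i : Fin k, Polynomial.C (c i) * Polynomial.X ^ (i : ℕ)
      with hp
    have hpdeg : p.natDegree < k := by
      have : p.natDegree ≤ k - 1 := by
        apply Polynomial.natDegree_sum_le_of_forall_le
        intro i _
        refine le_trans (Polynomial.natDegree_C_mul_le _ _) ?_
        rw [Polynomial.natDegree_X_pow]
        omega
      omega
    have hdep : ∑ μ ∈ w.support, (p.eval μ) • w μ = 0 := by
      rw [← hc]
      symm
      calc ∑ i : Fin k, c i • (s ^ (i : ℕ)) v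
          = ∑ i : Fin k, ∑ μ ∈ w.support, (c i * μ ^ (i : ℕ)) • w μ := by
            refine Finset.sum_congr rfl fun i _ => ?_
            rw [hsv, Finset.smul_sum]
            exact Finset.sum_congr rfl fun μ _ => by rw [smul_smul]
        _ = ∑ μ ∈ w.support, ∑ i : Fin k, (c i * μ ^ (i : ℕ)) • w μ := Finset.sum_comm
        _ = ∑ μ ∈ w.support, (p.eval μ) • w μ := by
            refine Finset.sum_congr rfl fun μ _ => ?_
            rw [← Finset.sum_smul]
            congr 1
            rw [hp, Polynomial.eval_finset_sum]
            simp
    have hLIw : LinearIndependent ℂ (fun ν : {x // x ∈ w.support} => w ν) :=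
      s.eigenvectors_linearIndependent' (fun ν : {x // x ∈ w.support} => (ν : ℂ))
        Subtype.coe_injective _
        (fun ν => ⟨hw ν, Finsupp.mem_support_iff.mp ν.2⟩)
    have heval : ∀ μ ∈ w.support, p.eval μ = 0 := by
      intro μ hμ
      have hsum' : ∑ ν : {x // x ∈ w.support}, (p.eval (ν : ℂ)) • w ν = 0 := by
        rw [Finset.sum_coe_sort w.support (fun ν => (p.eval ν) • w ν)]
        exact hdep
      exact Fintype.linearIndependent_iff.mp hLIw _ hsum' ⟨μ, hμ⟩
    have hp0 : p = 0 := by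
      apply Polynomial.eq_zero_of_natDegree_lt_card_of_eval_eq_zero' p w.support heval
      omega
    intro i
    have hcoeff : p.coeff (i : ℕ) = c i := by
      rw [hp, Polynomial.finset_sum_coeff]
      rw [Finset.sum_eq_single i]
      · simp
      · intro j _ hne
        rw [Polynomial.coeff_C_mul, Polynomial.coeff_X_pow, if_neg, mul_zero]
        exact fun h => hne (Fin.ext h.symm)
      · intro h; exact absurd (Finset.mem_univ i) h
    rw [← hcoeff, hp0, Polynomial.coeff_zero]
  refine ⟨hLI, ?_, ?_⟩
  · rw [finrank_span_eq_card hLI, Fintype.card_fin]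
  · intro u hu u' hu'
    induction hu, hu' using Submodule.span_induction₂ with
    | mem_mem x y hx hy =>
      obtain ⟨i, rfl⟩ := hx
      obtain ⟨j, rfl⟩ := hy
      exact hBij i j i.2 j.2
    | zero_left y hy => simp
    | zero_right x hx => simp
    | add_left x y z hx hy hz h1 h2 => simp [h1, h2]
    | add_right x y z hx hy hz h1 h2 => simp [h1, h2]
    | smul_left r x y hx hy h => simp [h]
    | smul_right r x y hx hy h => simp [h]
end
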